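/- arXiv:2109.10454 — 5 statements merged into one kernel-verified Lean document; each statement's English description precedes it below -/
import Mathlib

section
/- Let n, m, κ, d' ≥ 1 be integers and d = κd'. Suppose each matrix A_i ∈ ℝ^{m×n^κ} (i = 1,…,d') satisfies RIP(ε, S_{1,2}), set δ = max{(1+ε)^{d'} − 1, 1 − (1−ε)^{d'}}, and assume δ < 1. Then for every d-mode tensor X with side length n of HOSVD rank at most (1,…,1), i.e., X = c·x^1∘⋯∘x^d for a scalar c and unit vectors x^i ∈ ℝ^n, one has (1−δ)‖X‖_F² ≤ ‖𝒜(R(X))‖_F² ≤ (1+δ)‖X‖_F². -/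
open Finset

noncomputable section

/-- Squared Euclidean (Frobenius) norm of a finitely-indexed real vector/tensor. -/
def enorm2 {ι : Type*} [Fintype ι] (x : ι → ℝ) : ℝ := ∑ i, (x i) ^ 2

/-- Euclidean (trace) inner product. -/
def dotp {ι : Type*} [Fintype ι] (x y : ι → ℝ) : ℝ := ∑ i, x i * y i

/-- Kronecker product of `κ` vectors in `ℝ^n`, as a vector in `ℝ^{n^κ}`
(identifying `ℝ^{n^κ}` with `(Fin κ → Fin n) → ℝ` lexicographically). -/
def kron {n κ : ℕ} (u : Fin κ → (Fin n → ℝ)) : Fin (n ^ κ) → ℝ :=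
  fun j => ∏ i, u i (finFunctionFinEquiv.symm j i)

/-- `S₁`: Kronecker products of `κ` unit vectors of `ℝ^n`. -/
def S1 (n κ : ℕ) : Set (Fin (n ^ κ) → ℝ) :=
  {x | ∃ u : Fin κ → (Fin n → ℝ), (∀ i, enorm2 (u i) = 1) ∧ x = kron u}

/-- `S₂`: normalized sums of two orthogonal elements of `S₁`. -/
def S2 (n κ : ℕ) : Set (Fin (n ^ κ) → ℝ) :=
  {z | ∃ x ∈ S1 n κ, ∃ y ∈ S1 n κ, dotp x y = 0 ∧
        z = (Real.sqrt (enorm2 (x + y)))⁻¹ • (x + y)}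

/-- `S_{1,2} = S₁ ∪ S₂`. -/
def S12 (n κ : ℕ) : Set (Fin (n ^ κ) → ℝ) := S1 n κ ∪ S2 n κ

/-- The matrix `A` satisfies RIP(ε, S): `(1-ε)‖s‖² ≤ ‖As‖² ≤ (1+ε)‖s‖²` for all `s ∈ S`. -/
def MatrixRIP {m N : ℕ} (A : Matrix (Fin m) (Fin N) ℝ) (ε : ℝ) (S : Set (Fin N → ℝ)) : Prop :=
  ∀ s ∈ S, (1 - ε) * enorm2 s ≤ enorm2 (A.mulVec s) ∧
    enorm2 (A.mulVec s) ≤ (1 + ε) * enorm2 s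

/-- Index identification merging each block of `κ` consecutive indices (block `i` of the
original `d = κ·d'` indices becomes mode `i` of the reshaped tensor, merged lexicographically). -/
def reshapeIdx (n κ d' : ℕ) : (Fin (κ * d') → Fin n) ≃ (Fin d' → Fin (n ^ κ)) :=
  (Equiv.arrowCongr ((finCongr (Nat.mul_comm κ d')).trans finProdFinEquiv.symm)
      (Equiv.refl (Fin n))).trans
    ((Equiv.curry (Fin d') (Fin κ) (Fin n)).trans
      (Equiv.piCongrRight fun _ => finFunctionFinEquiv))

/-- The reshaping operator `R` turning a `d = κ·d'`-mode tensor with side length `n`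
into a `d'`-mode tensor with side length `n^κ`. -/
def reshape (n κ d' : ℕ) (X : (Fin (κ * d') → Fin n) → ℝ) : (Fin d' → Fin (n ^ κ)) → ℝ :=
  fun j => X ((reshapeIdx n κ d').symm j)

/-- The modewise measurement map `𝒜(Y) = Y ×₁ A₁ ×₂ ⋯ ×_{d'} A_{d'}`. -/
def modewiseAll {d' N m : ℕ} (A : Fin d' → Matrix (Fin m) (Fin N) ℝ)
    (Y : (Fin d' → Fin N) → ℝ) : (Fin d' → Fin m) → ℝ :=
  fun ℓ => ∑ j : Fin d' → Fin N, Y j * ∏ i, A i (ℓ i) (j i)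

/-- `X` has HOSVD rank at most `(r, …, r)`: it is expressible with a core tensor `C` and
orthonormal factor vectors `u^i_1, …, u^i_r` in each mode. -/
def HOSVDRankLE (d n r : ℕ) (X : (Fin d → Fin n) → ℝ) : Prop :=
  ∃ (C : (Fin d → Fin r) → ℝ) (u : Fin d → Fin r → (Fin n → ℝ)),
    (∀ i k, enorm2 (u i k) = 1) ∧
    (∀ i k k', k ≠ k' → dotp (u i k) (u i k') = 0) ∧
    (∀ t, X t = ∑ k : Fin d → Fin r, C k * ∏ i, u i (k i) (t i))

/-- Vectorization of a `d'`-mode tensor with side length `m` into `ℝ^{m^{d'}}`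
(via the lexicographic index bijection). -/
def vect {d' m : ℕ} (Y : (Fin d' → Fin m) → ℝ) : Fin (m ^ d') → ℝ :=
  fun j => Y (finFunctionFinEquiv.symm j)

end


section stmt0aux

open Finset

lemma enorm2_nonneg {ι : Type*} [Fintype ι] (x : ι → ℝ) : 0 ≤ enorm2 x :=
  Finset.sum_nonneg fun _ _ => sq_nonneg _

lemma enorm2_rankone {ι α : Type*} [Fintype ι] [Fintype α] [DecidableEq ι]
    (c : ℝ) (x : ι → α → ℝ) :
    enorm2 (fun t : ι → α => c * ∏ i, x i (t i)) = c ^ 2 * ∏ i, enorm2 (x i) := by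
  unfold enorm2
  simp_rw [mul_pow, ← Finset.prod_pow]
  rw [← Finset.mul_sum, Fintype.prod_sum (fun i a => (x i a) ^ 2)]

lemma enorm2_kron {n κ : ℕ} (u : Fin κ → Fin n → ℝ) :
    enorm2 (kron u) = ∏ i, enorm2 (u i) := by
  unfold enorm2 kron
  rw [← Equiv.sum_comp (finFunctionFinEquiv : (Fin κ → Fin n) ≃ _)
    (fun j => (∏ i, u i (finFunctionFinEquiv.symm j i)) ^ 2)]
  simp only [Equiv.symm_apply_apply]
  simp_rw [← Finset.prod_pow]
  rw [Fintype.prod_sum (fun i a => (u i a) ^ 2)]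

end stmt0aux

/-- Let `d = κ·d'`. If each `Aᵢ ∈ ℝ^{m×n^κ}` satisfies RIP(ε, S_{1,2}),
`δ = max{(1+ε)^{d'} − 1, 1 − (1−ε)^{d'}}` and `δ < 1`, then for every `d`-mode tensor `X`
with side length `n` of HOSVD rank at most `(1,…,1)`, i.e. `X = c·x¹∘⋯∘x^d` with `xⁱ`
unit vectors, one has `(1−δ)‖X‖_F² ≤ ‖𝒜(R(X))‖_F² ≤ (1+δ)‖X‖_F²`. -/
theorem stmt0 (n m κ d' : ℕ) (hn : 1 ≤ n) (hm : 1 ≤ m) (hκ : 1 ≤ κ) (hd' : 1 ≤ d')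
    (A : Fin d' → Matrix (Fin m) (Fin (n ^ κ)) ℝ) (ε δ : ℝ)
    (hA : ∀ i, MatrixRIP (A i) ε (S12 n κ))
    (hδ : δ = max ((1 + ε) ^ d' - 1) (1 - (1 - ε) ^ d'))
    (hδ1 : δ < 1)
    (X : (Fin (κ * d') → Fin n) → ℝ)
    (hX : ∃ (c : ℝ) (x : Fin (κ * d') → (Fin n → ℝ)),
      (∀ i, enorm2 (x i) = 1) ∧ ∀ t, X t = c * ∏ i, x i (t i)) :
    (1 - δ) * enorm2 X ≤ enorm2 (modewiseAll A (reshape n κ d' X)) ∧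
      enorm2 (modewiseAll A (reshape n κ d' X)) ≤ (1 + δ) * enorm2 X := by
  classical
  obtain ⟨c, x, hxu, hXt⟩ := hX
  have hXe : X = fun t => c * ∏ i, x i (t i) := funext hXt
  set e : Fin (κ * d') ≃ Fin d' × Fin κ :=
    (finCongr (Nat.mul_comm κ d')).trans finProdFinEquiv.symm with he
  set w : Fin d' → Fin (n ^ κ) → ℝ := fun i => kron (fun p => x (e.symm (i, p))) with hw
  -- reshape is rank one
  have hresh : reshape n κ d' X = fun j => c * ∏ i, w i (j i) := by
    funext j
    set T : Fin (κ * d') → Fin n := (reshapeIdx n κ d').symm j with hT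
    have happ : ∀ (t : Fin (κ * d') → Fin n) (i : Fin d'),
        reshapeIdx n κ d' t i = finFunctionFinEquiv (fun p => t (e.symm (i, p))) :=
      fun t i => rfl
    have hTj : ∀ i p, finFunctionFinEquiv.symm (j i) p = T (e.symm (i, p)) := by
      intro i p
      have h1 : reshapeIdx n κ d' T i = j i := by
        rw [hT, (reshapeIdx n κ d').apply_symm_apply]
      rw [happ] at h1
      have h2 : (fun p => T (e.symm (i, p))) = finFunctionFinEquiv.symm (j i) := by
        rw [Equiv.eq_symm_apply, h1]
      exact (congrFun h2 p).symm
    have : reshape n κ d' X j = c * ∏ t, x t (T t) := by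
      rw [reshape, hXe]
    rw [this]
    congr 1
    rw [← Equiv.prod_comp e.symm (fun t => x t (T t)), Fintype.prod_prod_type]
    refine Finset.prod_congr rfl fun i _ => ?_
    rw [hw]
    unfold kron
    exact Finset.prod_congr rfl fun p _ => by rw [hTj]
  -- modewise of rank one
  have hmod : modewiseAll A (reshape n κ d' X) =
      fun ℓ => c * ∏ i, (A i).mulVec (w i) (ℓ i) := by
    funext ℓ
    rw [modewiseAll, hresh]
    have : ∀ j : Fin d' → Fin (n ^ κ),
        (c * ∏ i, w i (j i)) * ∏ i, A i (ℓ i) (j i)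
          = c * ∏ i, (A i (ℓ i) (j i) * w i (j i)) := by
      intro j
      rw [mul_assoc, ← Finset.prod_mul_distrib]
      congr 1
      exact Finset.prod_congr rfl fun i _ => mul_comm _ _
    simp_rw [this]
    rw [← Finset.mul_sum, ← Fintype.prod_sum (fun i a => A i (ℓ i) a * w i a)]
    congr 1
  have hwS : ∀ i, w i ∈ S12 n κ := fun i =>
    Or.inl ⟨fun p => x (e.symm (i, p)), fun p => hxu _, rfl⟩
  have hw1 : ∀ i, enorm2 (w i) = 1 := by
    intro i
    rw [hw, enorm2_kron]
    simp [hxu]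
  set f : Fin d' → ℝ := fun i => enorm2 ((A i).mulVec (w i)) with hf
  have hf0 : ∀ i, 0 ≤ f i := fun i => enorm2_nonneg _
  have hfl : ∀ i, 1 - ε ≤ f i := by
    intro i
    have := (hA i (w i) (hwS i)).1
    rwa [hw1 i, mul_one] at this
  have hfu : ∀ i, f i ≤ 1 + ε := by
    intro i
    have := (hA i (w i) (hwS i)).2
    rwa [hw1 i, mul_one] at this
  have hεl : 0 ≤ 1 - ε := by
    by_contra h
    push_neg at h
    have h1 : (1 : ℝ) ≤ 1 + ε := by linarith
    have h2 : (1 + ε) ≤ (1 + ε) ^ d' :=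
      le_self_pow₀ h1 (Nat.one_le_iff_ne_zero.mp hd')
    have h3 : (1 + ε) ^ d' - 1 ≤ δ := hδ ▸ le_max_left _ _
    linarith
  have hprodu : ∏ i, f i ≤ (1 + ε) ^ d' := by
    calc ∏ i, f i ≤ ∏ _i : Fin d', (1 + ε) :=
          Finset.prod_le_prod (fun i _ => hf0 i) (fun i _ => hfu i)
      _ = (1 + ε) ^ d' := by simp
  have hprodl : (1 - ε) ^ d' ≤ ∏ i, f i := by
    calc (1 - ε) ^ d' = ∏ _i : Fin d', (1 - ε) := by simp
      _ ≤ ∏ i, f i := Finset.prod_le_prod (fun _ _ => hεl) (fun i _ => hfl i)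
  have hnX : enorm2 X = c ^ 2 := by
    rw [hXe, enorm2_rankone]
    simp [hxu]
  have hnA : enorm2 (modewiseAll A (reshape n κ d' X)) = c ^ 2 * ∏ i, f i := by
    rw [hmod, enorm2_rankone]
  have hc2 : (0:ℝ) ≤ c ^ 2 := sq_nonneg c
  have hδu : (1 + ε) ^ d' ≤ 1 + δ := by
    have := hδ ▸ le_max_left ((1 + ε) ^ d' - 1) (1 - (1 - ε) ^ d')
    linarith
  have hδl : 1 - δ ≤ (1 - ε) ^ d' := by
    have := hδ ▸ le_max_right ((1 + ε) ^ d' - 1) (1 - (1 - ε) ^ d')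
    linarith
  constructor
  · rw [hnX, hnA]
    calc (1 - δ) * c ^ 2 ≤ (1 - ε) ^ d' * c ^ 2 :=
          mul_le_mul_of_nonneg_right hδl hc2
      _ ≤ (∏ i, f i) * c ^ 2 := mul_le_mul_of_nonneg_right hprodl hc2
      _ = c ^ 2 * ∏ i, f i := mul_comm _ _
  · rw [hnX, hnA]
    calc c ^ 2 * ∏ i, f i = (∏ i, f i) * c ^ 2 := mul_comm _ _
      _ ≤ (1 + ε) ^ d' * c ^ 2 := mul_le_mul_of_nonneg_right hprodu hc2
      _ ≤ (1 + δ) * c ^ 2 := mul_le_mul_of_nonneg_right hδu hc2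
end

section
/- Let V be a real inner product space, L a linear operator on V, and v_1,…,v_K ∈ V an orthonormal system. Suppose that (1−ε)‖v_i‖² ≤ ‖L v_i‖² ≤ (1+ε)‖v_i‖² for all 1 ≤ i ≤ K, and that (1−ε)‖v_i ± v_j‖² ≤ ‖L(v_i ± v_j)‖² ≤ (1+ε)‖v_i ± v_j‖² for all 1 ≤ i, j ≤ K (both sign choices). Then every w in the span of {v_1,…,v_K} satisfies (1−Kε)‖w‖² ≤ ‖L w‖² ≤ (1+Kε)‖w‖². -/
open scoped RealInnerProductSpace

set_option maxHeartbeats 1000000 in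
/-- near-isometry on orthonormal systems extends to their span.
Let `V` be a real inner product space, `L` a linear operator on `V`, and `v₁,…,v_K` an
orthonormal system.  If `(1−ε)‖vᵢ‖² ≤ ‖Lvᵢ‖² ≤ (1+ε)‖vᵢ‖²` for all `i`, and
`(1−ε)‖vᵢ ± vⱼ‖² ≤ ‖L(vᵢ ± vⱼ)‖² ≤ (1+ε)‖vᵢ ± vⱼ‖²` for all `i, j` (both signs), then
every `w` in the span of the `vᵢ` satisfies `(1−Kε)‖w‖² ≤ ‖Lw‖² ≤ (1+Kε)‖w‖²`. -/
theorem stmt11 {V : Type*} [NormedAddCommGroup V] [InnerProductSpace ℝ V]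
    (L : V →ₗ[ℝ] V) (K : ℕ) (v : Fin K → V) (hv : Orthonormal ℝ v) (ε : ℝ)
    (h1 : ∀ i, (1 - ε) * ‖v i‖ ^ 2 ≤ ‖L (v i)‖ ^ 2 ∧
      ‖L (v i)‖ ^ 2 ≤ (1 + ε) * ‖v i‖ ^ 2)
    (h2p : ∀ i j, (1 - ε) * ‖v i + v j‖ ^ 2 ≤ ‖L (v i + v j)‖ ^ 2 ∧
      ‖L (v i + v j)‖ ^ 2 ≤ (1 + ε) * ‖v i + v j‖ ^ 2)
    (h2m : ∀ i j, (1 - ε) * ‖v i - v j‖ ^ 2 ≤ ‖L (v i - v j)‖ ^ 2 ∧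
      ‖L (v i - v j)‖ ^ 2 ≤ (1 + ε) * ‖v i - v j‖ ^ 2) :
    ∀ w ∈ Submodule.span ℝ (Set.range v),
      (1 - K * ε) * ‖w‖ ^ 2 ≤ ‖L w‖ ^ 2 ∧ ‖L w‖ ^ 2 ≤ (1 + K * ε) * ‖w‖ ^ 2 := by
  rcases Nat.eq_zero_or_pos K with hK | hK
  · subst hK
    intro w hw
    have : w = 0 := by
      simpa [Set.range_eq_empty, Submodule.span_empty, Submodule.mem_bot] using hw
    subst this
    simp
  -- ε ≥ 0
  have hvnorm : ∀ i, ‖v i‖ = 1 := fun i => hv.1 i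
  have hε : 0 ≤ ε := by
    obtain ⟨lo, hi⟩ := h1 ⟨0, hK⟩
    rw [hvnorm] at lo hi
    nlinarith
  -- key estimate on inner products
  have hkey : ∀ i j, abs (⟪L (v i), L (v j)⟫ - ⟪v i, v j⟫) ≤ ε := by
    intro i j
    have e1 := real_inner_eq_norm_add_mul_self_sub_norm_mul_self_sub_norm_mul_self_div_two
      (L (v i)) (L (v j))
    have e1' := real_inner_eq_norm_mul_self_add_norm_mul_self_sub_norm_sub_mul_self_div_two
      (L (v i)) (L (v j))
    have e2 := real_inner_eq_norm_add_mul_self_sub_norm_mul_self_sub_norm_mul_self_div_two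
      (v i) (v j)
    have e2' := real_inner_eq_norm_mul_self_add_norm_mul_self_sub_norm_sub_mul_self_div_two
      (v i) (v j)
    have par := parallelogram_law_with_norm ℝ (v i) (v j)
    have hp := h2p i j
    have hm := h2m i j
    rw [map_add] at hp
    rw [map_sub] at hm
    obtain ⟨hp1, hp2⟩ := hp
    obtain ⟨hm1, hm2⟩ := hm
    simp only [pow_two] at hp1 hp2 hm1 hm2
    have hi1 := hvnorm i
    have hj1 := hvnorm j
    rw [hi1, hj1] at par
    rw [abs_le]
    constructor <;> nlinarith [norm_nonneg (v i + v j), norm_nonneg (v i - v j),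
      sq_nonneg (‖v i + v j‖), sq_nonneg (‖v i - v j‖)]
  intro w hw
  obtain ⟨c, hc⟩ := (Submodule.mem_span_range_iff_exists_fun ℝ).mp hw
  have hLc : L w = ∑ i, c i • L (v i) := by
    rw [← hc, map_sum]; simp [map_smul]
  have hw2 : ‖w‖ ^ 2 = ∑ i, ∑ j, c i * c j * ⟪v i, v j⟫ := by
    rw [← real_inner_self_eq_norm_sq, ← hc]
    simp only [sum_inner, inner_sum, real_inner_smul_left, real_inner_smul_right]
    exact Finset.sum_congr rfl fun i _ => Finset.sum_congr rfl fun j _ => by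
      rw [real_inner_comm]; ring
  have hLw2 : ‖L w‖ ^ 2 = ∑ i, ∑ j, c i * c j * ⟪L (v i), L (v j)⟫ := by
    rw [← real_inner_self_eq_norm_sq, hLc]
    simp only [sum_inner, inner_sum, real_inner_smul_left, real_inner_smul_right]
    exact Finset.sum_congr rfl fun i _ => Finset.sum_congr rfl fun j _ => by
      rw [real_inner_comm]; ring
  have hnormw : ‖w‖ ^ 2 = ∑ i, c i ^ 2 := by
    rw [← real_inner_self_eq_norm_sq, ← hc, hv.inner_sum]
    simp [pow_two]
  have hD : ‖L w‖ ^ 2 - ‖w‖ ^ 2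
      = ∑ i, ∑ j, c i * c j * (⟪L (v i), L (v j)⟫ - ⟪v i, v j⟫) := by
    rw [hLw2, hw2, ← Finset.sum_sub_distrib]
    refine Finset.sum_congr rfl fun i _ => ?_
    rw [← Finset.sum_sub_distrib]
    exact Finset.sum_congr rfl fun j _ => by ring
  have habs : |‖L w‖ ^ 2 - ‖w‖ ^ 2| ≤ ε * ((∑ i, |c i|) * (∑ j, |c j|)) := by
    rw [hD]
    calc abs (∑ i, ∑ j, c i * c j * (⟪L (v i), L (v j)⟫ - ⟪v i, v j⟫))
        ≤ ∑ i, abs (∑ j, c i * c j * (⟪L (v i), L (v j)⟫ - ⟪v i, v j⟫)) :=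
          Finset.abs_sum_le_sum_abs _ _
      _ ≤ ∑ i, ∑ j, abs (c i * c j * (⟪L (v i), L (v j)⟫ - ⟪v i, v j⟫)) :=
          Finset.sum_le_sum fun i _ => Finset.abs_sum_le_sum_abs _ _
      _ ≤ ∑ i, ∑ j, |c i| * |c j| * ε := by
          refine Finset.sum_le_sum fun i _ => Finset.sum_le_sum fun j _ => ?_
          rw [abs_mul, abs_mul]
          exact mul_le_mul_of_nonneg_left (hkey i j) (by positivity)
      _ = ε * ((∑ i, |c i|) * (∑ j, |c j|)) := by
          rw [Finset.sum_mul_sum, Finset.mul_sum]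
          refine Finset.sum_congr rfl fun i _ => ?_
          rw [Finset.mul_sum]
          exact Finset.sum_congr rfl fun j _ => by ring
  have hCS : (∑ i, |c i|) * (∑ j, |c j|) ≤ (K : ℝ) * ‖w‖ ^ 2 := by
    have := sq_sum_le_card_mul_sum_sq (s := (Finset.univ : Finset (Fin K))) (f := fun i => |c i|)
    simp only [sq_abs, Finset.card_univ, Fintype.card_fin] at this
    rw [hnormw, ← pow_two]
    exact_mod_cast this
  have hfin : |‖L w‖ ^ 2 - ‖w‖ ^ 2| ≤ (K : ℝ) * ε * ‖w‖ ^ 2 := by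
    calc |‖L w‖ ^ 2 - ‖w‖ ^ 2| ≤ ε * ((∑ i, |c i|) * (∑ j, |c j|)) := habs
      _ ≤ ε * ((K : ℝ) * ‖w‖ ^ 2) := mul_le_mul_of_nonneg_left hCS hε
      _ = (K : ℝ) * ε * ‖w‖ ^ 2 := by ring
  obtain ⟨hlo, hhi⟩ := abs_le.mp hfin
  constructor <;> nlinarith [sq_nonneg ‖w‖]
end

section
/- Let V be a real inner product space, L a linear operator on V, and v_1,…,v_K ∈ V an orthonormal system (‖v_i‖ = 1, ⟨v_i,v_j⟩ = 0 for i ≠ j). If (1−ε)‖v_i ± v_j‖² ≤ ‖L(v_i ± v_j)‖² ≤ (1+ε)‖v_i ± v_j‖² for all 1 ≤ i, j ≤ K with i ≠ j (both sign choices), then |⟨L v_i, L v_j⟩| ≤ ε for all i ≠ j. -/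
open scoped RealInnerProductSpace

/-- a near-isometry nearly preserves orthogonality.
Let `V` be a real inner product space, `L` a linear operator on `V`, and `v₁,…,v_K` an
orthonormal system.  If `(1−ε)‖vᵢ ± vⱼ‖² ≤ ‖L(vᵢ ± vⱼ)‖² ≤ (1+ε)‖vᵢ ± vⱼ‖²` for all
`i ≠ j` (both signs), then `|⟨Lvᵢ, Lvⱼ⟩| ≤ ε` for all `i ≠ j`. -/
theorem stmt12 {V : Type*} [NormedAddCommGroup V] [InnerProductSpace ℝ V]
    (L : V →ₗ[ℝ] V) (K : ℕ) (v : Fin K → V) (hv : Orthonormal ℝ v) (ε : ℝ)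
    (h2p : ∀ i j, i ≠ j → (1 - ε) * ‖v i + v j‖ ^ 2 ≤ ‖L (v i + v j)‖ ^ 2 ∧
      ‖L (v i + v j)‖ ^ 2 ≤ (1 + ε) * ‖v i + v j‖ ^ 2)
    (h2m : ∀ i j, i ≠ j → (1 - ε) * ‖v i - v j‖ ^ 2 ≤ ‖L (v i - v j)‖ ^ 2 ∧
      ‖L (v i - v j)‖ ^ 2 ≤ (1 + ε) * ‖v i - v j‖ ^ 2) :
    ∀ i j, i ≠ j → |⟪L (v i), L (v j)⟫| ≤ ε := by
  intro i j hij
  obtain ⟨hp1, hp2⟩ := h2p i j hij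
  obtain ⟨hm1, hm2⟩ := h2m i j hij
  have hn1 : ‖v i‖ = 1 := hv.1 i
  have hn2 : ‖v j‖ = 1 := hv.1 j
  have hi0 : ⟪v i, v j⟫ = 0 := hv.2 hij
  have hp : ‖v i + v j‖ ^ 2 = 2 := by
    rw [norm_add_sq_real, hn1, hn2, hi0]; ring
  have hm : ‖v i - v j‖ ^ 2 = 2 := by
    rw [norm_sub_sq_real, hn1, hn2, hi0]; ring
  have hLp : ‖L (v i + v j)‖ ^ 2
      = ‖L (v i)‖ ^ 2 + 2 * ⟪L (v i), L (v j)⟫ + ‖L (v j)‖ ^ 2 := by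
    rw [map_add, norm_add_sq_real]
  have hLm : ‖L (v i - v j)‖ ^ 2
      = ‖L (v i)‖ ^ 2 - 2 * ⟪L (v i), L (v j)⟫ + ‖L (v j)‖ ^ 2 := by
    rw [map_sub, norm_sub_sq_real]
  rw [abs_le]
  constructor <;> nlinarith [hp1, hp2, hm1, hm2]
end

section
/- Let d' ≥ 1, n, m, κ, K ≥ 1, and let V_1,…,V_K be an orthonormal system of rank-one d'-mode tensors with side length n^κ, where V_k = v_k^1 ∘ ⋯ ∘ v_k^{d'} with ‖v_k^i‖₂ = 1 for all i, k. Fix 1 ≤ i₀ ≤ d', suppose the matrix A_{i₀} ∈ ℝ^{m×n^κ} satisfies RIP(ε/2, S_{1,2}), and suppose each v_k^{i₀} belongs to S_1. Then the linear map 𝒜_{i₀}(X) := X ×_{i₀} A_{i₀} satisfies: (1−ε)‖V_k‖_F² ≤ ‖𝒜_{i₀}(V_k)‖_F² ≤ (1+ε)‖V_k‖_F² for all 1 ≤ k ≤ K, and (1−ε)‖V_k ± V_ℓ‖_F² ≤ ‖𝒜_{i₀}(V_k ± V_ℓ)‖_F² ≤ (1+ε)‖V_k ± V_ℓ‖_F²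 for all 1 ≤ k, ℓ ≤ K (both sign choices). -/
open Finset

/-- The `i₀`-mode product `X ×_{i₀} A` of a `d'`-mode tensor with constant side length
`N` with a matrix `A ∈ ℝ^{m×N}`; mode `i₀` of the result has size `m`. -/
def modeProdU {d' N m : ℕ} (i0 : Fin d') (A : Matrix (Fin m) (Fin N) ℝ)
    (X : (Fin d' → Fin N) → ℝ) :
    ((i : Fin d') → Fin (Function.update (fun _ : Fin d' => N) i0 m i)) → ℝ :=
  fun ℓ => ∑ j : Fin N,
    X (fun i => if h : i = i0 then j
        else Fin.cast (Function.update_of_ne h m fun _ => N) (ℓ i)) *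
      A (Fin.cast (Function.update_self i0 m fun _ => N) (ℓ i0)) j

section Stmt13Aux

lemma dotp_self' {ι : Type*} [Fintype ι] (x : ι → ℝ) : dotp x x = enorm2 x := by
  simp [dotp, enorm2, sq]

lemma enorm2_add' {ι : Type*} [Fintype ι] (x y : ι → ℝ) :
    enorm2 (x + y) = enorm2 x + enorm2 y + 2 * dotp x y := by
  have h : ∀ i : ι, (x i + y i) ^ 2 = x i ^ 2 + y i ^ 2 + 2 * (x i * y i) := fun i => by ring
  simp only [enorm2, dotp, Pi.add_apply, h, Finset.sum_add_distrib, Finset.mul_sum]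

lemma enorm2_sub' {ι : Type*} [Fintype ι] (x y : ι → ℝ) :
    enorm2 (x - y) = enorm2 x + enorm2 y - 2 * dotp x y := by
  have h : ∀ i : ι, (x i - y i) ^ 2 = x i ^ 2 + y i ^ 2 - 2 * (x i * y i) := fun i => by ring
  simp only [enorm2, dotp, Pi.sub_apply, h]
  rw [Finset.sum_sub_distrib, Finset.sum_add_distrib, Finset.mul_sum]

lemma enorm2_smul' {ι : Type*} [Fintype ι] (c : ℝ) (x : ι → ℝ) :
    enorm2 (c • x) = c ^ 2 * enorm2 x := by
  simp [enorm2, Finset.mul_sum, mul_pow]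

lemma enorm2_neg' {ι : Type*} [Fintype ι] (x : ι → ℝ) : enorm2 (-x) = enorm2 x := by
  simp [enorm2]

lemma dotp_neg' {ι : Type*} [Fintype ι] (x y : ι → ℝ) : dotp x (-y) = -dotp x y := by
  simp [dotp, mul_neg, Finset.sum_neg_distrib]

lemma sum_pi_prod {d : ℕ} {F : Fin d → ℕ} (h : ∀ i, Fin (F i) → ℝ) :
    ∑ ℓ : (i : Fin d) → Fin (F i), ∏ i, h i (ℓ i) = ∏ i, ∑ x, h i x :=
  (Fintype.prod_sum h).symm

lemma dotp_outer {d N : ℕ} (v w : Fin d → Fin N → ℝ) :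
    dotp (fun t : Fin d → Fin N => ∏ i, v i (t i)) (fun t => ∏ i, w i (t i)) =
      ∏ i, dotp (v i) (w i) := by
  simp only [dotp, ← Finset.prod_mul_distrib]
  exact sum_pi_prod (fun i x => v i x * w i x)

/-- Per-mode factor of the mode product of an outer product. -/
def factorFn {d' N : ℕ} (i0 : Fin d') {m : ℕ} (q : Fin m → ℝ) (p : Fin d' → Fin N → ℝ) :
    (i : Fin d') → Fin (Function.update (fun _ : Fin d' => N) i0 m i) → ℝ :=
  fun i x =>
    if h : i = i0 then q (Fin.cast (by rw [h, Function.update_self]) x)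
    else p i (Fin.cast (Function.update_of_ne h m fun _ => N) x)

lemma factorFn_mul {d' N m : ℕ} (i0 : Fin d') (q q' : Fin m → ℝ)
    (p p' : Fin d' → Fin N → ℝ) (i : Fin d')
    (x : Fin (Function.update (fun _ : Fin d' => N) i0 m i)) :
    factorFn i0 q p i x * factorFn i0 q' p' i x =
      factorFn i0 (fun a => q a * q' a) (fun j a => p j a * p' j a) i x := by
  unfold factorFn
  split <;> rfl

lemma modeProdU_outer {d' N m : ℕ} (i0 : Fin d') (A : Matrix (Fin m) (Fin N) ℝ)
    (v : Fin d' → Fin N → ℝ)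
    (ℓ : (i : Fin d') → Fin (Function.update (fun _ : Fin d' => N) i0 m i)) :
    modeProdU i0 A (fun t => ∏ i, v i (t i)) ℓ =
      ∏ i, factorFn i0 (A.mulVec (v i0)) v i (ℓ i) := by
  unfold modeProdU
  have key : ∀ j : Fin N,
      (∏ i, v i (if h : i = i0 then j
          else Fin.cast (Function.update_of_ne h m fun _ => N) (ℓ i))) =
        v i0 j * ∏ i ∈ Finset.univ.erase i0, factorFn i0 (A.mulVec (v i0)) v i (ℓ i) := by
    intro j
    rw [← Finset.mul_prod_erase Finset.univ _ (Finset.mem_univ i0)]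
    congr 1
    · simp
    · refine Finset.prod_congr rfl fun i hi => ?_
      rw [dif_neg (Finset.ne_of_mem_erase hi)]
      simp [factorFn, dif_neg (Finset.ne_of_mem_erase hi)]
  simp only [key]
  rw [← Finset.mul_prod_erase Finset.univ _ (Finset.mem_univ i0)]
  have hfi0 : factorFn i0 (A.mulVec (v i0)) v i0 (ℓ i0) =
      A.mulVec (v i0) (Fin.cast (Function.update_self i0 m fun _ => N) (ℓ i0)) := by
    simp [factorFn]
  rw [hfi0, Matrix.mulVec, dotProduct, Finset.sum_mul]
  exact Finset.sum_congr rfl fun j _ => by ring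

lemma dotp_modeProdU_outer {d' N m : ℕ} (i0 : Fin d') (A : Matrix (Fin m) (Fin N) ℝ)
    (v w : Fin d' → Fin N → ℝ) :
    dotp (modeProdU i0 A (fun t => ∏ i, v i (t i)))
      (modeProdU i0 A (fun t => ∏ i, w i (t i))) =
    dotp (A.mulVec (v i0)) (A.mulVec (w i0)) *
      ∏ i ∈ Finset.univ.erase i0, dotp (v i) (w i) := by
  have h1 : ∀ ℓ, modeProdU i0 A (fun t => ∏ i, v i (t i)) ℓ *
      modeProdU i0 A (fun t => ∏ i, w i (t i)) ℓ =
      ∏ i, factorFn i0 (fun a => A.mulVec (v i0) a * A.mulVec (w i0) a)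
        (fun j a => v j a * w j a) i (ℓ i) := by
    intro ℓ
    rw [modeProdU_outer, modeProdU_outer, ← Finset.prod_mul_distrib]
    exact Finset.prod_congr rfl fun i _ => factorFn_mul ..
  rw [dotp]
  simp only [h1]
  rw [sum_pi_prod, ← Finset.mul_prod_erase Finset.univ _ (Finset.mem_univ i0)]
  congr 1
  · rw [dotp, ← Equiv.sum_comp (finCongr (Function.update_self i0 m fun _ => N).symm)
      (fun x => factorFn i0 (fun a => A.mulVec (v i0) a * A.mulVec (w i0) a)
        (fun j a => v j a * w j a) i0 x)]
    exact Finset.sum_congr rfl fun x _ => by simp [factorFn]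
  · refine Finset.prod_congr rfl fun i hi => ?_
    rw [dotp, ← Equiv.sum_comp
      (finCongr (Function.update_of_ne (Finset.ne_of_mem_erase hi) m fun _ => N).symm)
      (fun x => factorFn i0 (fun a => A.mulVec (v i0) a * A.mulVec (w i0) a)
        (fun j a => v j a * w j a) i x)]
    exact Finset.sum_congr rfl fun x _ => by
      simp [factorFn, dif_neg (Finset.ne_of_mem_erase hi)]

lemma modeProdU_add {d' N m : ℕ} (i0 : Fin d') (A : Matrix (Fin m) (Fin N) ℝ)
    (X Y : (Fin d' → Fin N) → ℝ) :
    modeProdU i0 A (X + Y) = modeProdU i0 A X + modeProdU i0 A Y := by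
  funext ℓ
  simp [modeProdU, add_mul, Finset.sum_add_distrib]

lemma modeProdU_sub {d' N m : ℕ} (i0 : Fin d') (A : Matrix (Fin m) (Fin N) ℝ)
    (X Y : (Fin d' → Fin N) → ℝ) :
    modeProdU i0 A (X - Y) = modeProdU i0 A X - modeProdU i0 A Y := by
  funext ℓ
  simp [modeProdU, sub_mul, Finset.sum_sub_distrib]

lemma neg_mem_S1 {n κ : ℕ} (hκ : 1 ≤ κ) {x : Fin (n ^ κ) → ℝ} (hx : x ∈ S1 n κ) :
    -x ∈ S1 n κ := by
  obtain ⟨u, hu, rfl⟩ := hx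
  refine ⟨Function.update u ⟨0, hκ⟩ (-(u ⟨0, hκ⟩)), ?_, ?_⟩
  · intro i
    rcases eq_or_ne i ⟨0, hκ⟩ with h | h
    · subst h
      rw [Function.update_self, enorm2_neg']
      exact hu _
    · rw [Function.update_of_ne h]
      exact hu _
  · funext j
    simp only [kron, Pi.neg_apply]
    rw [← Finset.mul_prod_erase Finset.univ
        (fun i => Function.update u ⟨0, hκ⟩ (-(u ⟨0, hκ⟩)) i (finFunctionFinEquiv.symm j i))
        (Finset.mem_univ (⟨0, hκ⟩ : Fin κ)),
      ← Finset.mul_prod_erase Finset.univ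
        (fun i => u i (finFunctionFinEquiv.symm j i)) (Finset.mem_univ (⟨0, hκ⟩ : Fin κ)),
      Function.update_self, Pi.neg_apply, neg_mul]
    congr 1
    congr 1
    refine (Finset.prod_congr rfl fun i hi => ?_).symm
    rw [Function.update_of_ne (Finset.ne_of_mem_erase hi)]

lemma rip_cross {n κ m : ℕ} (hκ : 1 ≤ κ) {A : Matrix (Fin m) (Fin (n ^ κ)) ℝ} {ε : ℝ}
    (hA : MatrixRIP A (ε / 2) (S12 n κ)) {x y : Fin (n ^ κ) → ℝ}
    (hx : x ∈ S1 n κ) (hy : y ∈ S1 n κ) (hx1 : enorm2 x = 1) (hy1 : enorm2 y = 1)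
    (hxy : dotp x y = 0) :
    |dotp (A.mulVec x) (A.mulVec y)| ≤ ε / 2 := by
  have sqrt2 : (Real.sqrt 2)⁻¹ ^ 2 = 1 / 2 := by
    rw [inv_pow, Real.sq_sqrt (by norm_num : (0:ℝ) ≤ 2)]
    norm_num
  have bound : ∀ y' : Fin (n ^ κ) → ℝ, y' ∈ S1 n κ → enorm2 y' = 1 → dotp x y' = 0 →
      2 - ε ≤ enorm2 (A.mulVec x + A.mulVec y') ∧
        enorm2 (A.mulVec x + A.mulVec y') ≤ 2 + ε := by
    intro y' hy' hy1' hxy'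
    have he : enorm2 (x + y') = 2 := by rw [enorm2_add', hx1, hy1', hxy']; ring
    have hmem : (Real.sqrt (enorm2 (x + y')))⁻¹ • (x + y') ∈ S12 n κ :=
      Or.inr ⟨x, hx, y', hy', hxy', rfl⟩
    have h := hA _ hmem
    have hval : enorm2 ((Real.sqrt (enorm2 (x + y')))⁻¹ • (x + y')) = 1 := by
      rw [he, enorm2_smul', he, sqrt2]; norm_num
    have hAval : enorm2 (A.mulVec ((Real.sqrt (enorm2 (x + y')))⁻¹ • (x + y'))) =
        (1 / 2) * enorm2 (A.mulVec x + A.mulVec y') := by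
      rw [he, Matrix.mulVec_smul, enorm2_smul', sqrt2, Matrix.mulVec_add]
    rw [hval, hAval] at h
    constructor <;> linarith [h.1, h.2]
  have hplus := bound y hy hy1 hxy
  have hminus := bound (-y) (neg_mem_S1 hκ hy) (by rw [enorm2_neg', hy1])
    (by rw [dotp_neg', hxy, neg_zero])
  rw [Matrix.mulVec_neg, ← sub_eq_add_neg] at hminus
  have e1 := enorm2_add' (A.mulVec x) (A.mulVec y)
  have e2 := enorm2_sub' (A.mulVec x) (A.mulVec y)
  rw [abs_le]
  constructor <;> linarith [hplus.1, hplus.2, hminus.1, hminus.2]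

end Stmt13Aux

/-- a single RIP mode product nearly preserves orthonormal systems of
rank-one tensors.  Let `V₁,…,V_K` be an orthonormal system of rank-one `d'`-mode
tensors with side length `n^κ`, `V_k = v_k¹ ∘ ⋯ ∘ v_k^{d'}` with unit factors.  If
`A_{i₀}` satisfies RIP(ε/2, S_{1,2}) and every `v_k^{i₀}` lies in `S₁`, then
`𝒜_{i₀}(X) = X ×_{i₀} A_{i₀}` satisfies
`(1−ε)‖V_k‖² ≤ ‖𝒜_{i₀}V_k‖² ≤ (1+ε)‖V_k‖²` and
`(1−ε)‖V_k ± V_ℓ‖² ≤ ‖𝒜_{i₀}(V_k ± V_ℓ)‖² ≤ (1+ε)‖V_k ± V_ℓ‖²`. -/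
theorem stmt13 (n m κ d' K : ℕ) (hn : 1 ≤ n) (hm : 1 ≤ m) (hκ : 1 ≤ κ) (hd' : 1 ≤ d')
    (hK : 1 ≤ K)
    (v : Fin K → Fin d' → (Fin (n ^ κ) → ℝ))
    (V : Fin K → ((Fin d' → Fin (n ^ κ)) → ℝ))
    (hV : ∀ k t, V k t = ∏ i, v k i (t i))
    (hunit : ∀ k i, enorm2 (v k i) = 1)
    (horthoV : ∀ k l, k ≠ l → dotp (V k) (V l) = 0)
    (hnormV : ∀ k, enorm2 (V k) = 1)
    (i0 : Fin d') (A : Matrix (Fin m) (Fin (n ^ κ)) ℝ) (ε : ℝ)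
    (hA : MatrixRIP A (ε / 2) (S12 n κ))
    (hS1 : ∀ k, v k i0 ∈ S1 n κ) :
    (∀ k, (1 - ε) * enorm2 (V k) ≤ enorm2 (modeProdU i0 A (V k)) ∧
        enorm2 (modeProdU i0 A (V k)) ≤ (1 + ε) * enorm2 (V k)) ∧
    (∀ k l, (1 - ε) * enorm2 (V k + V l) ≤ enorm2 (modeProdU i0 A (V k + V l)) ∧
        enorm2 (modeProdU i0 A (V k + V l)) ≤ (1 + ε) * enorm2 (V k + V l)) ∧
    (∀ k l, (1 - ε) * enorm2 (V k - V l) ≤ enorm2 (modeProdU i0 A (V k - V l)) ∧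
        enorm2 (modeProdU i0 A (V k - V l)) ≤ (1 + ε) * enorm2 (V k - V l)) := by
  have hVouter : ∀ k, V k = fun t => ∏ i, v k i (t i) := fun k => funext (hV k)
  have hEk : ∀ k, enorm2 (modeProdU i0 A (V k)) = enorm2 (A.mulVec (v k i0)) := by
    intro k
    rw [← dotp_self', hVouter k, dotp_modeProdU_outer, dotp_self']
    have h1 : ∏ i ∈ Finset.univ.erase i0, dotp (v k i) (v k i) = 1 :=
      Finset.prod_eq_one fun i _ => by rw [dotp_self', hunit]
    rw [h1, mul_one]
  have hDkl : ∀ k l, dotp (modeProdU i0 A (V k)) (modeProdU i0 A (V l)) =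
      dotp (A.mulVec (v k i0)) (A.mulVec (v l i0)) *
        ∏ i ∈ Finset.univ.erase i0, dotp (v k i) (v l i) := by
    intro k l
    rw [hVouter k, hVouter l, dotp_modeProdU_outer]
  have hdotpV : ∀ k l, dotp (V k) (V l) = ∏ i, dotp (v k i) (v l i) := fun k l => by
    rw [hVouter k, hVouter l, dotp_outer]
  have hRk : ∀ k, 1 - ε / 2 ≤ enorm2 (A.mulVec (v k i0)) ∧
      enorm2 (A.mulVec (v k i0)) ≤ 1 + ε / 2 := by
    intro k
    have h := hA (v k i0) (Or.inl (hS1 k))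
    rw [hunit k i0] at h
    constructor <;> linarith [h.1, h.2]
  have hε : 0 ≤ ε := by
    have h := hRk ⟨0, hK⟩
    linarith [h.1, h.2]
  have hcc : ∀ k l, k ≠ l →
      |dotp (A.mulVec (v k i0)) (A.mulVec (v l i0)) *
        ∏ i ∈ Finset.univ.erase i0, dotp (v k i) (v l i)| ≤ ε / 2 := by
    intro k l hkl
    by_cases h0 : dotp (v k i0) (v l i0) = 0
    · have hD : |dotp (A.mulVec (v k i0)) (A.mulVec (v l i0))| ≤ ε / 2 :=
        rip_cross hκ hA (hS1 k) (hS1 l) (hunit k i0) (hunit l i0) h0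
      have hc : |∏ i ∈ Finset.univ.erase i0, dotp (v k i) (v l i)| ≤ 1 := by
        rw [Finset.abs_prod]
        refine Finset.prod_le_one (fun i _ => abs_nonneg _) fun i _ => ?_
        have hcs := Finset.sum_mul_sq_le_sq_mul_sq Finset.univ (v k i) (v l i)
        have h1 : (∑ a, v k i a ^ 2) = 1 := hunit k i
        have h2 : (∑ a, v l i a ^ 2) = 1 := hunit l i
        rw [h1, h2, mul_one] at hcs
        have : (dotp (v k i) (v l i)) ^ 2 ≤ 1 := hcs
        nlinarith [abs_nonneg (dotp (v k i) (v l i)), sq_abs (dotp (v k i) (v l i))]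
      rw [abs_mul]
      have h4 : |dotp (A.mulVec (v k i0)) (A.mulVec (v l i0))| *
          |∏ i ∈ Finset.univ.erase i0, dotp (v k i) (v l i)| ≤ (ε / 2) * 1 :=
        mul_le_mul hD hc (abs_nonneg _) (le_trans (abs_nonneg _) hD)
      linarith
    · have h := horthoV k l hkl
      rw [hdotpV, ← Finset.mul_prod_erase Finset.univ _ (Finset.mem_univ i0)] at h
      have hc : ∏ i ∈ Finset.univ.erase i0, dotp (v k i) (v l i) = 0 :=
        (mul_eq_zero.mp h).resolve_left h0
      rw [hc, mul_zero, abs_zero]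
      linarith
  refine ⟨?_, ?_, ?_⟩
  · intro k
    rw [hnormV k, hEk k]
    have h := hRk k
    constructor <;> linarith [h.1, h.2]
  · intro k l
    by_cases hkl : k = l
    · subst hkl
      have e1 : enorm2 (V k + V k) = 4 := by
        rw [enorm2_add', dotp_self', hnormV]; ring
      have e2 : enorm2 (modeProdU i0 A (V k + V k)) = 4 * enorm2 (A.mulVec (v k i0)) := by
        rw [modeProdU_add, enorm2_add', dotp_self', hEk]; ring
      rw [e1, e2]
      have h := hRk k
      constructor <;> linarith [h.1, h.2]
    · have e1 : enorm2 (V k + V l) = 2 := by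
        rw [enorm2_add', hnormV, hnormV, horthoV k l hkl]; ring
      have e2 : enorm2 (modeProdU i0 A (V k + V l)) =
          enorm2 (A.mulVec (v k i0)) + enorm2 (A.mulVec (v l i0)) +
            2 * (dotp (A.mulVec (v k i0)) (A.mulVec (v l i0)) *
              ∏ i ∈ Finset.univ.erase i0, dotp (v k i) (v l i)) := by
        rw [modeProdU_add, enorm2_add', hEk, hEk, hDkl]
      rw [e1, e2]
      have h1 := hRk k
      have h2 := hRk l
      have h3 := abs_le.mp (hcc k l hkl)
      constructor <;> linarith [h1.1, h1.2, h2.1, h2.2, h3.1, h3.2]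
  · intro k l
    by_cases hkl : k = l
    · subst hkl
      have e1 : enorm2 (V k - V k) = 0 := by
        rw [enorm2_sub', dotp_self', hnormV]; ring
      have e2 : enorm2 (modeProdU i0 A (V k - V k)) = 0 := by
        rw [modeProdU_sub, enorm2_sub', dotp_self', hEk]; ring
      rw [e1, e2]
      norm_num
    · have e1 : enorm2 (V k - V l) = 2 := by
        rw [enorm2_sub', hnormV, hnormV, horthoV k l hkl]; ring
      have e2 : enorm2 (modeProdU i0 A (V k - V l)) =
          enorm2 (A.mulVec (v k i0)) + enorm2 (A.mulVec (v l i0)) -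
            2 * (dotp (A.mulVec (v k i0)) (A.mulVec (v l i0)) *
              ∏ i ∈ Finset.univ.erase i0, dotp (v k i) (v l i)) := by
        rw [modeProdU_sub, enorm2_sub', hEk, hEk, hDkl]
      rw [e1, e2]
      have h1 := hRk k
      have h2 := hRk l
      have h3 := abs_le.mp (hcc k l hkl)
      constructor <;> linarith [h1.1, h1.2, h2.1, h2.2, h3.1, h3.2]
end

section
/- There is an absolute constant C > 0 such that for all integers n ≥ 1 and κ ≥ 2, the Dudley-type integral of the set S_{1,2} ⊆ ℝ^{n^κ} satisfies ∫₀¹ √(ln N(S_{1,2}, t)) dt ≤ C √(κ n ln κ), where N(S_{1,2}, t) is the covering number of S_{1,2} in the Euclidean metric. -/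
open Finset

noncomputable section

open scoped RealInnerProductSpace ENNReal

/-- The covering number `N(S, t)`: the minimal cardinality of a subset of `S` whose
`t`-neighborhoods cover `S` (`⊤` if no finite such net exists). -/
def coveringNumber {α : Type*} [PseudoMetricSpace α] (S : Set α) (t : ℝ) : ℕ∞ :=
  ⨅ (N : Finset α) (_ : ↑N ⊆ S) (_ : ∀ x ∈ S, ∃ y ∈ N, dist x y ≤ t), (N.card : ℕ∞)

/-- Kronecker product of `κ` vectors in `ℝ^n`, as a vector in `ℝ^{n^κ}`
(identifying `ℝ^{n^κ}` with `(Fin κ → Fin n) → ℝ` lexicographically). -/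
def kronE {n κ : ℕ} (u : Fin κ → EuclideanSpace ℝ (Fin n)) :
    EuclideanSpace ℝ (Fin (n ^ κ)) :=
  WithLp.toLp 2 (fun j => ∏ i, u i (finFunctionFinEquiv.symm j i))

/-- `S₁`: Kronecker products of `κ` unit vectors of `ℝ^n`. -/
def S1E (n κ : ℕ) : Set (EuclideanSpace ℝ (Fin (n ^ κ))) :=
  {x | ∃ u : Fin κ → EuclideanSpace ℝ (Fin n), (∀ i, ‖u i‖ = 1) ∧ x = kronE u}

/-- `S₂`: normalized sums of two orthogonal elements of `S₁`. -/
def S2E (n κ : ℕ) : Set (EuclideanSpace ℝ (Fin (n ^ κ))) :=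
  {z | ∃ x ∈ S1E n κ, ∃ y ∈ S1E n κ, ⟪x, y⟫ = (0 : ℝ) ∧ z = ‖x + y‖⁻¹ • (x + y)}

/-- `S_{1,2} = S₁ ∪ S₂`. -/
def S12E (n κ : ℕ) : Set (EuclideanSpace ℝ (Fin (n ^ κ))) := S1E n κ ∪ S2E n κ

/-! ### Auxiliary lemmas -/

open Metric MeasureTheory in
lemma sqrt_add_le_aux {a b : ℝ} (ha : 0 ≤ a) (hb : 0 ≤ b) :
    Real.sqrt (a + b) ≤ Real.sqrt a + Real.sqrt b := by
  have h1 := Real.sq_sqrt ha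
  have h2 := Real.sq_sqrt hb
  have h3 := Real.sqrt_nonneg a
  have h4 := Real.sqrt_nonneg b
  have h5 : Real.sqrt (a + b) ≤ Real.sqrt ((Real.sqrt a + Real.sqrt b) ^ 2) := by
    apply Real.sqrt_le_sqrt
    nlinarith
  rwa [Real.sqrt_sq (by positivity)] at h5

open scoped Classical in
lemma prod_sub_prod_tele {ι : Type*} [LinearOrder ι] (s : Finset ι) (a b : ι → ℝ) :
    ∏ i ∈ s, a i - ∏ i ∈ s, b i =
      ∑ i ∈ s, (∏ l ∈ s.filter (· < i), a l) * (a i - b i) * ∏ l ∈ s.filter (i < ·), b l := by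
  induction s using Finset.induction_on_max with
  | empty => simp
  | insert M s hs ih =>
    have hM : M ∉ s := fun h => lt_irrefl M (hs M h)
    rw [Finset.prod_insert hM, Finset.prod_insert hM, Finset.sum_insert hM]
    have e1 : (insert M s).filter (· < M) = s := by
      ext x; simp only [Finset.mem_filter, Finset.mem_insert]
      constructor
      · rintro ⟨rfl | hx, h2⟩
        · exact absurd h2 (lt_irrefl _)
        · exact hx
      · intro hx
        exact ⟨Or.inr hx, hs x hx⟩
    have e2 : (insert M s).filter (M < ·) = ∅ := by
      ext x; simp only [Finset.mem_filter, Finset.mem_insert, Finset.notMem_empty, iff_false]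
      rintro ⟨rfl | hx, h2⟩
      · exact lt_irrefl _ h2
      · exact absurd h2 (not_lt.2 (hs x hx).le)
    rw [e1, e2]
    have e3 : ∀ i ∈ s, (∏ l ∈ (insert M s).filter (· < i), a l) * (a i - b i) *
        ∏ l ∈ (insert M s).filter (i < ·), b l
        = ((∏ l ∈ s.filter (· < i), a l) * (a i - b i) * ∏ l ∈ s.filter (i < ·), b l) * b M := by
      intro i hi
      have h1 : (insert M s).filter (· < i) = s.filter (· < i) := by
        rw [Finset.filter_insert, if_neg (not_lt.2 (hs i hi).le)]
      have h2 : (insert M s).filter (i < ·) = insert M (s.filter (i < ·)) := by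
        rw [Finset.filter_insert, if_pos (hs i hi)]
      have hM2 : M ∉ s.filter (i < ·) := fun h => hM (Finset.mem_of_mem_filter M h)
      rw [h1, h2, Finset.prod_insert hM2]
      ring
    rw [Finset.sum_congr rfl e3, ← Finset.sum_mul, ← ih]
    simp only [Finset.prod_empty]
    ring

lemma prod_split_lt {ι : Type*} [LinearOrder ι] [Fintype ι] (i : ι) (f : ι → ℝ) :
    ∏ l, f l = (∏ l ∈ univ.filter (· < i), f l) * f i * ∏ l ∈ univ.filter (i < ·), f l := by
  classical
  have h : univ.filter (fun l => ¬ l < i) = insert i (univ.filter (i < ·)) := by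
    ext x
    simp only [Finset.mem_filter, Finset.mem_univ, true_and, Finset.mem_insert, not_lt]
    rw [le_iff_lt_or_eq]
    constructor
    · rintro (h | h)
      · exact Or.inr h
      · exact Or.inl h.symm
    · rintro (rfl | h)
      · exact Or.inr rfl
      · exact Or.inl h
  rw [← Finset.prod_filter_mul_prod_filter_not univ (· < i) f, h,
    Finset.prod_insert (by simp), mul_assoc]

lemma norm_kronE {n κ : ℕ} (w : Fin κ → EuclideanSpace ℝ (Fin n)) :
    ‖kronE w‖ = ∏ i, ‖w i‖ := by
  have key : ∑ j, ‖kronE w j‖ ^ 2 = ∏ i, ‖w i‖ ^ 2 := by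
    calc ∑ j, ‖kronE w j‖ ^ 2
        = ∑ j, ∏ i, ‖w i (finFunctionFinEquiv.symm j i)‖ ^ 2 := by
          refine Finset.sum_congr rfl fun j _ => ?_
          rw [show (kronE w j) = ∏ i, w i (finFunctionFinEquiv.symm j i) from rfl]
          simp [Real.norm_eq_abs, sq_abs, ← Finset.prod_pow]
      _ = ∑ g : Fin κ → Fin n, ∏ i, ‖w i (g i)‖ ^ 2 :=
          Equiv.sum_comp finFunctionFinEquiv.symm (fun g => ∏ i, ‖w i (g i)‖ ^ 2)
      _ = ∏ i, ∑ x, ‖w i x‖ ^ 2 := by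
          rw [Finset.prod_univ_sum]
          rw [Fintype.piFinset_univ]
      _ = ∏ i, ‖w i‖ ^ 2 := by
          refine Finset.prod_congr rfl fun i _ => ?_
          rw [EuclideanSpace.norm_eq, Real.sq_sqrt]
          positivity
  rw [EuclideanSpace.norm_eq]
  calc Real.sqrt (∑ j, ‖kronE w j‖ ^ 2) = Real.sqrt ((∏ i, ‖w i‖) ^ 2) := by
        rw [key, Finset.prod_pow]
    _ = ∏ i, ‖w i‖ := Real.sqrt_sq (Finset.prod_nonneg fun i _ => norm_nonneg _)

lemma euclid_sum_apply {m : ℕ} {ι : Type*} (s : Finset ι)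
    (f : ι → EuclideanSpace ℝ (Fin m)) (j : Fin m) :
    (∑ i ∈ s, f i) j = ∑ i ∈ s, f i j := by
  classical
  induction s using Finset.induction with
  | empty => rfl
  | insert a s h ih =>
    rw [Finset.sum_insert h, Finset.sum_insert h, ← ih]
    rfl

open scoped Classical in
lemma kronE_sub {n κ : ℕ} (u v : Fin κ → EuclideanSpace ℝ (Fin n)) :
    kronE u - kronE v =
      ∑ i, kronE (fun l => if l < i then u l else if l = i then u i - v i else v l) := by
  ext j
  have happ : ∀ (z : Fin κ → EuclideanSpace ℝ (Fin n)),
      kronE z j = ∏ i, z i (finFunctionFinEquiv.symm j i) := fun z => rfl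
  have hL : (kronE u - kronE v) j = kronE u j - kronE v j := rfl
  have hR : (∑ i, kronE (fun l => if l < i then u l else if l = i then u i - v i else v l)) j
      = ∑ i, kronE (fun l => if l < i then u l else if l = i then u i - v i else v l) j :=
    euclid_sum_apply _ _ _
  rw [hL, hR, happ, happ]
  have tele := prod_sub_prod_tele (Finset.univ : Finset (Fin κ))
    (fun i => u i (finFunctionFinEquiv.symm j i)) (fun i => v i (finFunctionFinEquiv.symm j i))
  simp only [Finset.sum_apply] at *
  rw [tele]
  refine Finset.sum_congr rfl fun i _ => ?_
  rw [happ, prod_split_lt i]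
  have h1 : ∀ l ∈ Finset.univ.filter (· < i),
      (if l < i then u l else if l = i then u i - v i else v l) (finFunctionFinEquiv.symm j l)
        = u l (finFunctionFinEquiv.symm j l) := by
    intro l hl
    rw [if_pos (Finset.mem_filter.mp hl).2]
  have h2 : ∀ l ∈ Finset.univ.filter (i < ·),
      (if l < i then u l else if l = i then u i - v i else v l) (finFunctionFinEquiv.symm j l)
        = v l (finFunctionFinEquiv.symm j l) := by
    intro l hl
    have hil := (Finset.mem_filter.mp hl).2
    rw [if_neg (not_lt.2 hil.le), if_neg (ne_of_gt hil)]
  rw [Finset.prod_congr rfl h1, Finset.prod_congr rfl h2]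
  congr 1
  rw [if_neg (lt_irrefl i), if_pos rfl]
  rfl

lemma norm_kronE_sub_le {n κ : ℕ} (u v : Fin κ → EuclideanSpace ℝ (Fin n))
    (hu : ∀ i, ‖u i‖ ≤ 1) (hv : ∀ i, ‖v i‖ ≤ 1) :
    ‖kronE u - kronE v‖ ≤ ∑ i, ‖u i - v i‖ := by
  classical
  rw [kronE_sub]
  refine (norm_sum_le _ _).trans (Finset.sum_le_sum fun i _ => ?_)
  rw [norm_kronE, prod_split_lt i]
  rw [if_neg (lt_irrefl i), if_pos rfl]
  have hA : (∏ l ∈ Finset.univ.filter (· < i),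
      ‖if l < i then u l else if l = i then u i - v i else v l‖) ≤ 1 := by
    refine Finset.prod_le_one (fun l _ => norm_nonneg _) fun l hl => ?_
    rw [if_pos (Finset.mem_filter.mp hl).2]; exact hu l
  have hB : (∏ l ∈ Finset.univ.filter (i < ·),
      ‖if l < i then u l else if l = i then u i - v i else v l‖) ≤ 1 := by
    refine Finset.prod_le_one (fun l _ => norm_nonneg _) fun l hl => ?_
    have hil := (Finset.mem_filter.mp hl).2
    rw [if_neg (not_lt.2 hil.le), if_neg (ne_of_gt hil)]; exact hv l
  calc (∏ l ∈ Finset.univ.filter (· < i),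
        ‖if l < i then u l else if l = i then u i - v i else v l‖) * ‖u i - v i‖ *
        ∏ l ∈ Finset.univ.filter (i < ·),
        ‖if l < i then u l else if l = i then u i - v i else v l‖
      ≤ 1 * ‖u i - v i‖ * 1 := by
        refine mul_le_mul (mul_le_mul hA le_rfl (norm_nonneg _) zero_le_one) hB
          (Finset.prod_nonneg fun l _ => norm_nonneg _) ?_
        positivity
    _ = ‖u i - v i‖ := by ring

open Metric MeasureTheory in
lemma sphere_net (n : ℕ) (hn : 0 < n) {δ : ℝ} (hδ : 0 < δ) (hδ1 : δ ≤ 1) :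
    ∃ F : Finset (EuclideanSpace ℝ (Fin n)),
      ↑F ⊆ Metric.sphere (0 : EuclideanSpace ℝ (Fin n)) 1 ∧
      (∀ x ∈ Metric.sphere (0 : EuclideanSpace ℝ (Fin n)) 1, ∃ y ∈ F, dist x y ≤ δ) ∧
      (F.card : ℝ) ≤ (3 / δ) ^ n := by
  set E := EuclideanSpace ℝ (Fin n)
  haveI : Nontrivial E := by
    refine ⟨0, EuclideanSpace.single ⟨0, hn⟩ 1, fun h => ?_⟩
    have := congrArg norm h
    rw [norm_zero, EuclideanSpace.norm_single] at this
    norm_num at this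
  -- the family of δ-separated subsets of the sphere
  set 𝒮 : Set (Set E) :=
    {T | T ⊆ Metric.sphere (0 : E) 1 ∧ T.Pairwise (fun x y => δ ≤ dist x y)} with h𝒮
  -- cardinality bound for finite separated sets
  have cardbd : ∀ F : Finset E, ↑F ⊆ Metric.sphere (0 : E) 1 →
      ((F : Set E).Pairwise (fun x y => δ ≤ dist x y)) → (F.card : ℝ) ≤ (3 / δ) ^ n := by
    intro F hFs hFsep
    have hdisj : (F : Set E).PairwiseDisjoint (fun y => Metric.ball y (δ / 2)) := by
      intro x hx y hy hxy
      exact Metric.ball_disjoint_ball (by linarith [hFsep hx hy hxy])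
    have hμ : volume (⋃ y ∈ F, Metric.ball y (δ / 2)) = ∑ y ∈ F, volume (Metric.ball y (δ / 2)) :=
      measure_biUnion_finset hdisj (fun y _ => measurableSet_ball)
    have hsub : (⋃ y ∈ F, Metric.ball y (δ / 2)) ⊆ Metric.ball (0 : E) (1 + δ / 2) := by
      intro z hz
      simp only [Set.mem_iUnion] at hz
      obtain ⟨y, hy, hzy⟩ := hz
      have hy1 : ‖y‖ = 1 := by simpa using hFs hy
      rw [Metric.mem_ball] at hzy ⊢
      calc dist z (0 : E) ≤ dist z y + dist y 0 := dist_triangle _ _ _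
        _ < δ / 2 + 1 := by
            rw [dist_zero_right, hy1]
            linarith
        _ = 1 + δ / 2 := by ring
    have hballE : ∀ y : E, volume (Metric.ball y (δ / 2))
        = ENNReal.ofReal ((δ / 2) ^ n) * volume (Metric.ball (0 : E) 1) := by
      intro y
      rw [Measure.addHaar_ball volume y (by linarith : (0:ℝ) ≤ δ / 2)]
      congr 2
      rw [finrank_euclideanSpace_fin]
    have hbig : volume (Metric.ball (0 : E) (1 + δ / 2))
        = ENNReal.ofReal ((1 + δ / 2) ^ n) * volume (Metric.ball (0 : E) 1) := by
      rw [Measure.addHaar_ball volume 0 (by linarith : (0:ℝ) ≤ 1 + δ / 2)]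
      congr 2
      rw [finrank_euclideanSpace_fin]
    have key : (F.card : ℝ≥0∞) * (ENNReal.ofReal ((δ / 2) ^ n) * volume (Metric.ball (0 : E) 1))
        ≤ ENNReal.ofReal ((1 + δ / 2) ^ n) * volume (Metric.ball (0 : E) 1) := by
      calc (F.card : ℝ≥0∞) * (ENNReal.ofReal ((δ / 2) ^ n) * volume (Metric.ball (0 : E) 1))
          = ∑ y ∈ F, volume (Metric.ball y (δ / 2)) := by
            rw [Finset.sum_congr rfl fun y _ => hballE y, Finset.sum_const, nsmul_eq_mul]
        _ = volume (⋃ y ∈ F, Metric.ball y (δ / 2)) := hμ.symm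
        _ ≤ volume (Metric.ball (0 : E) (1 + δ / 2)) := measure_mono hsub
        _ = _ := hbig
    have hb0 : volume (Metric.ball (0 : E) 1) ≠ 0 :=
      (measure_ball_pos volume 0 one_pos).ne'
    have hbt : volume (Metric.ball (0 : E) 1) ≠ ⊤ := measure_ball_lt_top.ne
    rw [← mul_assoc] at key
    have key2 : (F.card : ℝ≥0∞) * ENNReal.ofReal ((δ / 2) ^ n)
        ≤ ENNReal.ofReal ((1 + δ / 2) ^ n) :=
      (ENNReal.mul_le_mul_iff_left hb0 hbt).mp key
    have key3 : (F.card : ℝ) * (δ / 2) ^ n ≤ (1 + δ / 2) ^ n := by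
      have := ENNReal.toReal_mono (by simp) key2
      rw [ENNReal.toReal_mul, ENNReal.toReal_ofReal (by positivity),
        ENNReal.toReal_ofReal (by positivity)] at this
      simpa using this
    have hpow : (0:ℝ) < (δ / 2) ^ n := by positivity
    rw [← le_div_iff₀ hpow] at key3
    refine key3.trans ?_
    rw [← div_pow]
    refine pow_le_pow_left₀ (by positivity) ?_ n
    rw [div_le_div_iff₀ (by linarith) hδ]
    nlinarith
  -- Zorn's lemma: a maximal separated subset
  have hZ : ∀ c ⊆ 𝒮, IsChain (· ⊆ ·) c → c.Nonempty → ∃ ub ∈ 𝒮, ∀ s ∈ c, s ⊆ ub := by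
    intro c hc hchain _
    refine ⟨⋃₀ c, ⟨?_, ?_⟩, fun s hs => Set.subset_sUnion_of_mem hs⟩
    · intro x hx
      obtain ⟨T, hT, hxT⟩ := hx
      exact (hc hT).1 hxT
    · intro x hx y hy hxy
      obtain ⟨T1, hT1, hx1⟩ := hx
      obtain ⟨T2, hT2, hy2⟩ := hy
      rcases eq_or_ne T1 T2 with rfl | hne
      · exact (hc hT1).2 hx1 hy2 hxy
      rcases hchain hT1 hT2 hne with h | h
      · exact (hc hT2).2 (h hx1) hy2 hxy
      · exact (hc hT1).2 hx1 (h hy2) hxy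
  obtain ⟨M, -, hM⟩ := zorn_subset_nonempty 𝒮 hZ ∅ ⟨Set.empty_subset _, Set.pairwise_empty _⟩
  have hMs : M ⊆ Metric.sphere (0 : E) 1 := hM.prop.1
  have hMsep : M.Pairwise (fun x y => δ ≤ dist x y) := hM.prop.2
  -- M is finite
  have hMfin : M.Finite := by
    by_contra hinf
    obtain ⟨T, hTM, hTcard⟩ :=
      Set.Infinite.exists_subset_card_eq hinf
        (Nat.floor ((3 / δ) ^ n) + 1)
    have hb := cardbd T (hTM.trans hMs) (hMsep.mono hTM)
    rw [hTcard] at hb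
    have := Nat.lt_floor_add_one ((3 / δ) ^ n)
    push_cast at hb
    linarith
  refine ⟨hMfin.toFinset, by simpa using hMs, ?_, ?_⟩
  · intro x hx
    by_contra hcon
    push_neg at hcon
    have hxM : x ∉ M := fun h => by
      have := hcon x (by simpa using h)
      rw [dist_self] at this
      linarith
    have hins : insert x M ∈ 𝒮 := by
      constructor
      · exact Set.insert_subset hx hMs
      · refine (letI : Std.Symm (fun x y : E => δ ≤ dist x y) := ⟨?_⟩; Set.pairwise_insert_of_symm).mpr ⟨hMsep, fun y hy _ => ?_⟩
        · intro a b hab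
          rw [dist_comm]
          exact hab
        · exact (hcon y (by simpa using hy)).le
    have := hM.2 hins (Set.subset_insert x M)
    exact hxM (this (Set.mem_insert x M))
  · have := cardbd hMfin.toFinset (by simpa using hMs) (by simpa using hMsep)
    exact this

/-! ### Covering number basics -/

lemma coveringNumber_le_card {α : Type*} [PseudoMetricSpace α] {S : Set α} {t : ℝ}
    (N : Finset α) (h1 : ↑N ⊆ S) (h2 : ∀ x ∈ S, ∃ y ∈ N, dist x y ≤ t) :
    coveringNumber S t ≤ (N.card : ℕ∞) :=
  iInf_le_of_le N (iInf_le_of_le h1 (iInf_le_of_le h2 le_rfl))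

lemma one_le_coveringNumber {α : Type*} [PseudoMetricSpace α] {S : Set α} {t : ℝ}
    (hS : S.Nonempty) : 1 ≤ coveringNumber S t := by
  refine le_iInf fun N => le_iInf fun hN => le_iInf fun hcov => ?_
  obtain ⟨x, hx⟩ := hS
  obtain ⟨y, hy, -⟩ := hcov x hx
  have : 0 < N.card := Finset.card_pos.mpr ⟨y, hy⟩
  exact_mod_cast this

lemma coveringNumber_anti {α : Type*} [PseudoMetricSpace α] (S : Set α) {s t : ℝ}
    (hst : s ≤ t) : coveringNumber S t ≤ coveringNumber S s := by
  refine le_iInf fun N => le_iInf fun hN => le_iInf fun hcov => coveringNumber_le_card N hN ?_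
  intro x hx
  obtain ⟨y, hy, hd⟩ := hcov x hx
  exact ⟨y, hy, hd.trans hst⟩

lemma internal_net_of_external {α : Type*} [PseudoMetricSpace α] (S : Set α) (T : Finset α)
    {r : ℝ} (hcov : ∀ x ∈ S, ∃ p ∈ T, dist x p ≤ r) :
    ∃ N : Finset α, ↑N ⊆ S ∧ (∀ x ∈ S, ∃ y ∈ N, dist x y ≤ 2 * r) ∧ N.card ≤ T.card := by
  classical
  set c : α → α := fun p => if h : ∃ s ∈ S, dist s p ≤ r then h.choose else p with hc
  set T' := T.filter (fun p => ∃ s ∈ S, dist s p ≤ r) with hT'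
  have hcS : ∀ p, (∃ s ∈ S, dist s p ≤ r) → c p ∈ S ∧ dist (c p) p ≤ r := by
    intro p hp
    have : c p = hp.choose := dif_pos hp
    rw [this]
    exact ⟨hp.choose_spec.1, hp.choose_spec.2⟩
  refine ⟨T'.image c, ?_, ?_, (Finset.card_image_le).trans (Finset.card_filter_le _ _)⟩
  · intro y hy
    simp only [Finset.coe_image, Set.mem_image, Finset.mem_coe, Finset.mem_filter, hT'] at hy
    obtain ⟨p, ⟨-, hp⟩, rfl⟩ := hy
    exact (hcS p hp).1
  · intro x hx
    obtain ⟨p, hpT, hpd⟩ := hcov x hx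
    have hex : ∃ s ∈ S, dist s p ≤ r := ⟨x, hx, hpd⟩
    refine ⟨c p, Finset.mem_image_of_mem c (Finset.mem_filter.mpr ⟨hpT, hex⟩), ?_⟩
    calc dist x (c p) ≤ dist x p + dist p (c p) := dist_triangle _ _ _
      _ = dist x p + dist (c p) p := by rw [dist_comm p (c p)]
      _ ≤ r + r := add_le_add hpd (hcS p hex).2
      _ = 2 * r := by ring

/-! ### Nets for `S₁` and `S₂` -/

lemma norm_of_mem_S1E {n κ : ℕ} {x : EuclideanSpace ℝ (Fin (n ^ κ))} (hx : x ∈ S1E n κ) :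
    ‖x‖ = 1 := by
  obtain ⟨u, hu, rfl⟩ := hx
  rw [norm_kronE]
  simp [hu]

lemma S1E_nonempty {n κ : ℕ} (hn : 0 < n) : (S1E n κ).Nonempty :=
  ⟨kronE (fun _ => EuclideanSpace.single ⟨0, hn⟩ 1),
    fun _ => EuclideanSpace.single ⟨0, hn⟩ 1,
    fun _ => by rw [EuclideanSpace.norm_single]; norm_num, rfl⟩

open Metric in
lemma S1_net {n κ : ℕ} (hn : 0 < n) {δ : ℝ} (hδ : 0 < δ) (hδ1 : δ ≤ 1) :
    ∃ F : Finset (EuclideanSpace ℝ (Fin (n ^ κ))), ↑F ⊆ S1E n κ ∧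
      (∀ x ∈ S1E n κ, ∃ y ∈ F, dist x y ≤ κ * δ) ∧ (F.card : ℝ) ≤ ((3 / δ) ^ n) ^ κ := by
  classical
  obtain ⟨F0, hF0s, hF0cov, hF0card⟩ := sphere_net n hn hδ hδ1
  refine ⟨(Fintype.piFinset (fun _ : Fin κ => F0)).image kronE, ?_, ?_, ?_⟩
  · intro y hy
    simp only [Finset.coe_image, Set.mem_image, Finset.mem_coe, Fintype.mem_piFinset] at hy
    obtain ⟨g, hg, rfl⟩ := hy
    exact ⟨g, fun i => mem_sphere_zero_iff_norm.mp (hF0s (hg i)), rfl⟩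
  · rintro x ⟨u, hu, rfl⟩
    have hex : ∀ i, ∃ y ∈ F0, dist (u i) y ≤ δ := fun i =>
      hF0cov (u i) (mem_sphere_zero_iff_norm.mpr (hu i))
    choose g hg hgd using hex
    refine ⟨kronE g, Finset.mem_image_of_mem _ (Fintype.mem_piFinset.mpr hg), ?_⟩
    rw [dist_eq_norm]
    refine (norm_kronE_sub_le u g (fun i => (hu i).le)
      (fun i => (mem_sphere_zero_iff_norm.mp (hF0s (hg i))).le)).trans ?_
    calc ∑ i, ‖u i - g i‖ ≤ ∑ _i : Fin κ, δ :=
          Finset.sum_le_sum fun i _ => by rw [← dist_eq_norm]; exact hgd i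
      _ = κ * δ := by simp [mul_comm]
  · calc (((Fintype.piFinset (fun _ : Fin κ => F0)).image kronE).card : ℝ)
        ≤ ((Fintype.piFinset (fun _ : Fin κ => F0)).card : ℝ) := by
          exact_mod_cast Finset.card_image_le
      _ = (F0.card : ℝ) ^ κ := by
          rw [Fintype.card_piFinset]
          push_cast
          simp
      _ ≤ ((3 / δ) ^ n) ^ κ := pow_le_pow_left₀ (by positivity) hF0card κ

open Metric in
lemma S2_net {n κ : ℕ} (hn : 0 < n) {δ : ℝ} (hδ : 0 < δ) (hδ1 : δ ≤ 1) :
    ∃ N : Finset (EuclideanSpace ℝ (Fin (n ^ κ))), ↑N ⊆ S2E n κ ∧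
      (∀ z ∈ S2E n κ, ∃ y ∈ N, dist z y ≤ 4 * κ * δ) ∧
      (N.card : ℝ) ≤ (((3 / δ) ^ n) ^ κ) ^ 2 := by
  classical
  obtain ⟨F, hFs, hFcov, hFcard⟩ := S1_net (κ := κ) hn hδ hδ1
  set T := (F ×ˢ F).image (fun p => (Real.sqrt 2)⁻¹ • (p.1 + p.2)) with hT
  have hext : ∀ z ∈ S2E n κ, ∃ p ∈ T, dist z p ≤ 2 * κ * δ := by
    rintro z ⟨x, hx, y, hy, hxy, rfl⟩
    obtain ⟨x', hx', hdx⟩ := hFcov x hx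
    obtain ⟨y', hy', hdy⟩ := hFcov y hy
    refine ⟨(Real.sqrt 2)⁻¹ • (x' + y'), ?_, ?_⟩
    · rw [hT]
      have hp : (x', y') ∈ F ×ˢ F := Finset.mem_product.mpr ⟨hx', hy'⟩
      simp only [Finset.mem_image]; exact ⟨(x', y'), hp, rfl⟩
    have hnx : ‖x‖ = 1 := norm_of_mem_S1E hx
    have hny : ‖y‖ = 1 := norm_of_mem_S1E hy
    have hsum : ‖x + y‖ = Real.sqrt 2 := by
      have h2 : ‖x + y‖ ^ 2 = 2 := by
        rw [norm_add_sq_real, hxy, hnx, hny]; ring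
      rw [← h2, Real.sqrt_sq (norm_nonneg _)]
    have h2 : (1 : ℝ) ≤ Real.sqrt 2 := by
      rw [show (1:ℝ) = Real.sqrt 1 by simp]
      exact Real.sqrt_le_sqrt one_le_two
    have hinv : ‖(Real.sqrt 2)⁻¹‖ ≤ 1 := by
      rw [Real.norm_eq_abs, abs_of_nonneg (by positivity)]
      exact inv_le_one_of_one_le₀ h2
    have hdiff : ‖x + y - (x' + y')‖ ≤ 2 * κ * δ := by
      calc ‖x + y - (x' + y')‖ = ‖(x - x') + (y - y')‖ := by
            congr 1
            abel
        _ ≤ ‖x - x'‖ + ‖y - y'‖ := norm_add_le _ _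
        _ ≤ κ * δ + κ * δ := by
            rw [← dist_eq_norm, ← dist_eq_norm]
            exact add_le_add hdx hdy
        _ = 2 * κ * δ := by ring
    rw [hsum, dist_eq_norm, ← smul_sub, norm_smul]
    calc ‖(Real.sqrt 2)⁻¹‖ * ‖x + y - (x' + y')‖ ≤ 1 * (2 * κ * δ) :=
          mul_le_mul hinv hdiff (norm_nonneg _) zero_le_one
      _ = 2 * κ * δ := by ring
  obtain ⟨N, hNs, hNcov, hNcard⟩ := internal_net_of_external (S2E n κ) T hext
  refine ⟨N, hNs, ?_, ?_⟩
  · intro z hz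
    obtain ⟨y, hyN, hd⟩ := hNcov z hz
    exact ⟨y, hyN, hd.trans (by nlinarith [Nat.cast_nonneg (α := ℝ) κ])⟩
  · calc (N.card : ℝ) ≤ (T.card : ℝ) := by exact_mod_cast hNcard
      _ ≤ ((F ×ˢ F).card : ℝ) := by exact_mod_cast Finset.card_image_le
      _ = (F.card : ℝ) * (F.card : ℝ) := by rw [Finset.card_product]; push_cast; ring
      _ ≤ ((3 / δ) ^ n) ^ κ * ((3 / δ) ^ n) ^ κ :=
          mul_le_mul hFcard hFcard (Nat.cast_nonneg _) (by positivity)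
      _ = (((3 / δ) ^ n) ^ κ) ^ 2 := by ring

lemma cov_S12_bound {n κ : ℕ} (hn : 1 ≤ n) (hκ : 2 ≤ κ) {t : ℝ} (ht : 0 < t) (ht1 : t ≤ 1) :
    ∃ m : ℕ, coveringNumber (S12E n κ) t ≤ (m : ℕ∞) ∧
      (m : ℝ) ≤ 2 * (12 * κ / t) ^ (2 * κ * n) := by
  classical
  have hκR : (2 : ℝ) ≤ (κ : ℝ) := by exact_mod_cast hκ
  set δ : ℝ := t / (4 * κ) with hδdef
  have hδ : 0 < δ := by
    apply div_pos ht
    positivity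
  have hδ1 : δ ≤ 1 := by
    rw [hδdef, div_le_one (by positivity)]
    nlinarith
  obtain ⟨F1, h1s, h1cov, h1card⟩ := S1_net (n := n) (κ := κ) hn hδ hδ1
  obtain ⟨N2, h2s, h2cov, h2card⟩ := S2_net (n := n) (κ := κ) hn hδ hδ1
  have h4κδ : 4 * (κ : ℝ) * δ = t := by
    rw [hδdef]
    field_simp
  refine ⟨F1.card + N2.card, ?_, ?_⟩
  · refine (coveringNumber_le_card (F1 ∪ N2) ?_ ?_).trans ?_
    · rw [Finset.coe_union]
      exact Set.union_subset_union h1s h2s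
    · rintro x (hx | hx)
      · obtain ⟨y, hy, hd⟩ := h1cov x hx
        refine ⟨y, Finset.mem_union_left _ hy, hd.trans ?_⟩
        rw [← h4κδ]
        nlinarith [Nat.cast_nonneg (α := ℝ) κ]
      · obtain ⟨y, hy, hd⟩ := h2cov x hx
        refine ⟨y, Finset.mem_union_right _ hy, hd.trans ?_⟩
        rw [h4κδ]
    · exact_mod_cast Nat.cast_le.mpr (Finset.card_union_le F1 N2)
  · have hbase : 3 / δ = 12 * κ / t := by
      rw [hδdef]
      field_simp
      ring
    have hbase1 : (1 : ℝ) ≤ 3 / δ := by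
      rw [hbase]
      rw [le_div_iff₀ ht]
      nlinarith
    have e1 : ((3 / δ) ^ n) ^ κ = (3 / δ) ^ (n * κ) := (pow_mul _ _ _).symm
    have e2 : (((3 / δ) ^ n) ^ κ) ^ 2 = (3 / δ) ^ (n * κ * 2) := by
      rw [← pow_mul, ← pow_mul]
      ring_nf
    have hle1 : (F1.card : ℝ) ≤ (3 / δ) ^ (2 * κ * n) := by
      refine h1card.trans ?_
      rw [e1]
      refine pow_le_pow_right₀ hbase1 ?_
      nlinarith [hn, hκ]
    have hle2 : (N2.card : ℝ) ≤ (3 / δ) ^ (2 * κ * n) := by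
      refine h2card.trans ?_
      rw [e2]
      apply le_of_eq
      congr 1
      ring
    push_cast
    rw [hbase] at hle1 hle2
    linarith

open MeasureTheory

set_option maxHeartbeats 1000000

/-- the Dudley-type integral of `S_{1,2}`.  There is an absolute
constant `C > 0` such that for all `n ≥ 1` and `κ ≥ 2`,
`∫₀¹ √(ln N(S_{1,2}, t)) dt ≤ C √(κ n ln κ)`. -/
theorem stmt18 :
    ∃ C : ℝ, 0 < C ∧
      ∀ n κ : ℕ, 1 ≤ n → 2 ≤ κ →
        (∫ t in (0 : ℝ)..1,
            Real.sqrt (Real.log (ENNReal.toReal (coveringNumber (S12E n κ) t : ℝ≥0∞)))) ≤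
          C * Real.sqrt (κ * n * Real.log κ) := by
  classical
  refine ⟨100, by norm_num, fun n κ hn hκ => ?_⟩
  have hκR : (2 : ℝ) ≤ (κ : ℝ) := by exact_mod_cast hκ
  have hnR : (1 : ℝ) ≤ (n : ℝ) := by exact_mod_cast hn
  set f : ℝ → ℝ :=
    fun t => Real.sqrt (Real.log (ENNReal.toReal (coveringNumber (S12E n κ) t : ℝ≥0∞))) with hf
  set X : ℝ → ℝ := fun t => ENNReal.toReal (coveringNumber (S12E n κ) t : ℝ≥0∞) with hX
  set e : ℕ := 2 * κ * n with he
  have heR : ((e : ℝ)) = 2 * (κ : ℝ) * (n : ℝ) := by rw [he]; push_cast; ring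
  have he1 : (1 : ℝ) ≤ (e : ℝ) := by rw [heR]; nlinarith
  set B : ℝ := Real.sqrt (e : ℝ) with hB
  set A : ℝ := B * Real.sqrt (Real.log (24 * κ)) with hA
  have hB0 : 0 ≤ B := Real.sqrt_nonneg _
  have hA0 : 0 ≤ A := mul_nonneg hB0 (Real.sqrt_nonneg _)
  have hSne : (S12E n κ).Nonempty := by
    obtain ⟨x, hx⟩ := S1E_nonempty (n := n) (κ := κ) hn
    exact ⟨x, Or.inl hx⟩
  -- bounds on X on (0,1]
  have hcov : ∀ t : ℝ, 0 < t → t ≤ 1 →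
      1 ≤ X t ∧ X t ≤ 2 * (12 * κ / t) ^ e := by
    intro t ht ht1
    obtain ⟨m, hm, hmb⟩ := cov_S12_bound hn hκ ht ht1
    have hcast : ((coveringNumber (S12E n κ) t : ℕ∞) : ℝ≥0∞) ≤ (m : ℝ≥0∞) := by
      rw [show ((m : ℝ≥0∞)) = (((m : ℕ∞)) : ℝ≥0∞) from (ENat.toENNReal_coe m).symm]
      exact ENat.toENNReal_le.mpr hm
    have hnetop : ((coveringNumber (S12E n κ) t : ℕ∞) : ℝ≥0∞) ≠ ⊤ :=
      ne_top_of_le_ne_top (ENNReal.natCast_ne_top m) hcast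
    constructor
    · have h1 : (1 : ℝ≥0∞) ≤ ((coveringNumber (S12E n κ) t : ℕ∞) : ℝ≥0∞) := by
        have := ENat.toENNReal_le.mpr (one_le_coveringNumber (S := S12E n κ) (t := t) hSne)
        simpa using this
      have := ENNReal.toReal_mono hnetop h1
      simpa using this
    · have h2 := ENNReal.toReal_mono (ENNReal.natCast_ne_top m) hcast
      rw [ENNReal.toReal_natCast] at h2
      exact h2.trans hmb
  -- pointwise bound by an integrable function
  have hfg : ∀ t ∈ Set.Ioc (0:ℝ) 1, f t ≤ A + B * t ^ (-(1/2) : ℝ) := by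
    rintro t ⟨ht, ht1⟩
    obtain ⟨hX1, hX2⟩ := hcov t ht ht1
    have hY : (0:ℝ) < 12 * κ / t := by positivity
    have hY1 : (1:ℝ) ≤ 12 * κ / t := by
      rw [le_div_iff₀ ht]
      nlinarith
    have step1 : Real.log (X t) ≤ Real.log (2 * (12 * κ / t) ^ e) :=
      Real.log_le_log (lt_of_lt_of_le one_pos hX1) hX2
    have step2 : Real.log (2 * (12 * κ / t) ^ e)
        = Real.log 2 + (e : ℝ) * Real.log (12 * κ / t) := by
      rw [Real.log_mul (by norm_num) (pow_ne_zero _ (ne_of_gt hY)), Real.log_pow]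
    have step3 : Real.log 2 + (e : ℝ) * Real.log (12 * κ / t)
        ≤ (e : ℝ) * (Real.log 2 + Real.log (12 * κ / t)) := by
      have hl2 : (0:ℝ) ≤ Real.log 2 := Real.log_nonneg one_le_two
      have hlY : (0:ℝ) ≤ Real.log (12 * κ / t) := Real.log_nonneg hY1
      nlinarith
    have step4 : Real.log 2 + Real.log (12 * κ / t) = Real.log (24 * κ / t) := by
      rw [← Real.log_mul (by norm_num) (ne_of_gt hY)]
      congr 1
      ring
    have step5 : Real.log (24 * κ / t) ≤ Real.log (24 * κ) + 1 / t := by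
      rw [Real.log_div (by positivity) (ne_of_gt ht)]
      have hinv : Real.log t⁻¹ ≤ t⁻¹ - 1 := Real.log_le_sub_one_of_pos (by positivity)
      rw [Real.log_inv] at hinv
      rw [one_div]
      linarith
    have hkey : Real.log (X t) ≤ (e : ℝ) * (Real.log (24 * κ) + 1 / t) := by
      calc Real.log (X t) ≤ (e : ℝ) * Real.log (24 * κ / t) := by
            rw [← step4]
            exact step1.trans (step2 ▸ step3)
        _ ≤ (e : ℝ) * (Real.log (24 * κ) + 1 / t) :=
            mul_le_mul_of_nonneg_left step5 (by linarith)
    have hlog24 : (0:ℝ) ≤ Real.log (24 * κ) := Real.log_nonneg (by nlinarith)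
    calc f t = Real.sqrt (Real.log (X t)) := rfl
      _ ≤ Real.sqrt ((e : ℝ) * (Real.log (24 * κ) + 1 / t)) := Real.sqrt_le_sqrt hkey
      _ = B * Real.sqrt (Real.log (24 * κ) + 1 / t) := by
          rw [Real.sqrt_mul (by linarith) _]
      _ ≤ B * (Real.sqrt (Real.log (24 * κ)) + Real.sqrt (1 / t)) :=
          mul_le_mul_of_nonneg_left (sqrt_add_le_aux hlog24 (by positivity)) hB0
      _ = A + B * Real.sqrt (1 / t) := by rw [hA]; ring
      _ = A + B * t ^ (-(1/2) : ℝ) := by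
          have hrt : Real.sqrt (1 / t) = t ^ (-(1/2) : ℝ) := by
            rw [one_div, Real.sqrt_inv, Real.sqrt_eq_rpow, ← Real.rpow_neg ht.le]
          rw [hrt]
  -- antitonicity of f on (0,1]
  have hanti : AntitoneOn f (Set.Ioc (0:ℝ) 1) := by
    rintro s ⟨hs0, hs1⟩ t ⟨ht0, ht1⟩ hst
    obtain ⟨m, hm, -⟩ := cov_S12_bound hn hκ hs0 hs1
    have hcovle : (coveringNumber (S12E n κ) t) ≤ (coveringNumber (S12E n κ) s) :=
      coveringNumber_anti _ hst
    have hse : ((coveringNumber (S12E n κ) s : ℕ∞) : ℝ≥0∞) ≠ ⊤ := by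
      refine ne_top_of_le_ne_top (ENNReal.natCast_ne_top m) ?_
      rw [show ((m : ℝ≥0∞)) = (((m : ℕ∞)) : ℝ≥0∞) from (ENat.toENNReal_coe m).symm]
      exact ENat.toENNReal_le.mpr hm
    have hXle : X t ≤ X s := ENNReal.toReal_mono hse (ENat.toENNReal_le.mpr hcovle)
    have hXpos : (0:ℝ) < X t := lt_of_lt_of_le one_pos (hcov t ht0 ht1).1
    exact Real.sqrt_le_sqrt (Real.log_le_log hXpos hXle)
  -- integrability
  have hrpow : IntervalIntegrable (fun t : ℝ => t ^ (-(1/2) : ℝ)) volume 0 1 :=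
    intervalIntegral.intervalIntegrable_rpow' (by norm_num)
  have hgI : IntervalIntegrable (fun t : ℝ => A + B * t ^ (-(1/2) : ℝ)) volume 0 1 :=
    (intervalIntegrable_const (c := A)).add (hrpow.const_mul B)
  have hfae : AEMeasurable f (volume.restrict (Set.Ioc (0:ℝ) 1)) :=
    aemeasurable_restrict_of_antitoneOn measurableSet_Ioc hanti
  have hfint : IntegrableOn f (Set.Ioc (0:ℝ) 1) volume := by
    refine Integrable.mono hgI.1 hfae.aestronglyMeasurable ?_
    refine (ae_restrict_iff' measurableSet_Ioc).mpr (ae_of_all _ fun t ht => ?_)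
    have hg0 : 0 ≤ A + B * t ^ (-(1/2) : ℝ) := by
      have : (0:ℝ) ≤ t ^ (-(1/2) : ℝ) := Real.rpow_nonneg ht.1.le _
      nlinarith
    rw [Real.norm_eq_abs, Real.norm_eq_abs, abs_of_nonneg (Real.sqrt_nonneg _),
      abs_of_nonneg hg0]
    exact hfg t ht
  -- numeric facts
  set P : ℝ := Real.sqrt ((κ : ℝ) * (n : ℝ)) with hP
  set L : ℝ := Real.sqrt (Real.log κ) with hL
  have hP0 : 0 ≤ P := Real.sqrt_nonneg _
  have hL0 : 0 ≤ L := Real.sqrt_nonneg _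
  have hPL : P * L = Real.sqrt ((κ : ℝ) * (n : ℝ) * Real.log κ) := by
    rw [hP, hL, ← Real.sqrt_mul (by positivity)]
  have hsqrt2 : Real.sqrt 2 ≤ 3 / 2 := by
    nlinarith [Real.sq_sqrt (by norm_num : (0:ℝ) ≤ 2), Real.sqrt_nonneg 2]
  have hBP : B ≤ 3 / 2 * P := by
    rw [hB, heR, mul_assoc, Real.sqrt_mul (by norm_num : (0:ℝ) ≤ 2), ← hP]
    nlinarith
  have hlogκ : Real.log 2 ≤ Real.log κ := Real.log_le_log two_pos hκR
  have h2L : 2 ≤ 3 * L := by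
    have hsq := Real.sq_sqrt (Real.log_nonneg (by linarith) : (0:ℝ) ≤ Real.log κ)
    have := Real.log_two_gt_d9
    nlinarith [hL0]
  have h24L : Real.sqrt (Real.log (24 * κ)) ≤ 3 * L := by
    have h246 : (24:ℝ) * κ ≤ κ ^ 6 := by
      have h5 : (2:ℝ) ^ 5 ≤ (κ:ℝ) ^ 5 := pow_le_pow_left₀ (by norm_num) hκR 5
      nlinarith
    have hle : Real.log (24 * κ) ≤ 6 * Real.log κ := by
      have := Real.log_le_log (by positivity : (0:ℝ) < 24 * κ) h246
      rwa [Real.log_pow, show ((6:ℕ):ℝ) = 6 by norm_num] at this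
    calc Real.sqrt (Real.log (24 * κ)) ≤ Real.sqrt (9 * Real.log κ) := by
          apply Real.sqrt_le_sqrt
          have : (0:ℝ) ≤ Real.log κ := Real.log_nonneg (by linarith)
          linarith
      _ = 3 * L := by
          rw [Real.sqrt_mul (by norm_num : (0:ℝ) ≤ 9), ← hL,
            show Real.sqrt 9 = 3 by
              rw [show (9:ℝ) = 3 ^ 2 by norm_num, Real.sqrt_sq (by norm_num)]]
  -- put everything together
  calc (∫ t in (0:ℝ)..1, f t) = ∫ t in Set.Ioc (0:ℝ) 1, f t :=
        intervalIntegral.integral_of_le zero_le_one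
    _ ≤ ∫ t in Set.Ioc (0:ℝ) 1, (A + B * t ^ (-(1/2) : ℝ)) :=
        setIntegral_mono_on hfint hgI.1 measurableSet_Ioc hfg
    _ = ∫ t in (0:ℝ)..1, (A + B * t ^ (-(1/2) : ℝ)) :=
        (intervalIntegral.integral_of_le zero_le_one).symm
    _ = A + B * 2 := by
        rw [intervalIntegral.integral_add (intervalIntegrable_const (c := A))
          (hrpow.const_mul B), intervalIntegral.integral_const,
          intervalIntegral.integral_const_mul, integral_rpow (Or.inl (by norm_num))]
        rw [Real.zero_rpow (by norm_num), Real.one_rpow]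
        norm_num
    _ ≤ 100 * Real.sqrt ((κ : ℝ) * (n : ℝ) * Real.log κ) := by
        rw [← hPL]
        have hAB : A ≤ B * (3 * L) := by
          rw [hA]
          exact mul_le_mul_of_nonneg_left h24L hB0
        have hB2 : B * 2 ≤ B * (3 * L) := mul_le_mul_of_nonneg_left h2L hB0
        have hBL : B * (3 * L) ≤ 3 / 2 * P * (3 * L) :=
          mul_le_mul_of_nonneg_right hBP (by linarith)
        nlinarith [mul_nonneg hP0 hL0]

end
end
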